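/- Detecting delivery of values: for every well-formed configuration Γ ▷ W, channel c and closed value v, with fresh channels eureka and fail (occurring free neither in W nor exposed in Γ) and values ok, no of transmission time 1: Γ ▷ W ⟹γ(c,v)⟹ Γ' ▷ W' if and only if Γ ▷ (W | T_{γ(c,v)}) ⟶_i^* ⟶_σ ⟶_i^* Γ' ▷ (W' | T✓_{γ(c,v)}), where T_{γ(c,v)} = νd:(0,·).( c(x).(([x=v] d!⟨ok⟩, nil) + fail!⟨no⟩) | σ².([exp(d)] eureka!⟨ok⟩, nil) ) and T✓_{γ(c,v)} = νd:(0,·).( σ.d!⟨ok⟩ | σ.([exp(d)] eureka!⟨ok⟩, nil) ). -/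
import Mathlib


/- A formalization of the Calculus of Collision-prone Communicating Processes (CCCP). -/

namespace CCCP

/-- Channels are represented by natural numbers. -/
abbrev Chan : Type := ℕ

/-- A channel environment maps each channel to an exposure time and a value. -/
abbrev ChanEnv (V : Type) : Type := Chan → ℕ × V

/-- Expressions: values and (de Bruijn) data variables. -/
inductive Exp (V : Type) : Type where
  | val (v : V)
  | var (i : ℕ)

/-- Boolean expressions: equality tests and exposure checks. -/
inductive BExp (V : Type) : Type where
  | beq (e1 e2 : Exp V)
  | exposed (c : Chan)

/-- Station code (processes).  Data variables and process (recursion) variables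
are in de Bruijn style: `rcv c P Q` binds data variable 0 in `P`, and `fix P`
binds process variable 0 in `P`. -/
inductive Proc (V : Type) : Type where
  | broadcast (c : Chan) (e : Exp V) (P : Proc V)  -- c!⟨e⟩.P
  | rcv (c : Chan) (P Q : Proc V)                  -- ⌊c?(x).P⌋Q
  | sigma (P : Proc V)                             -- σ.P
  | tau (P : Proc V)                               -- τ.P
  | sum (P Q : Proc V)                             -- P + Q
  | mtch (b : BExp V) (P Q : Proc V)               -- [b]P,Q
  | pvar (X : ℕ)                                   -- process variable
  | nil                                            -- termination
  | fix (P : Proc V)                               -- recursion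

/-- System terms.  `active c P` is an active receiver c(x).P which binds data
variable 0 in `P`; `res c n v W` is the channel restriction νc:(n,v).W. -/
inductive Sys (V : Type) : Type where
  | proc (P : Proc V)
  | active (c : Chan) (P : Proc V)
  | par (W1 W2 : Sys V)
  | res (c : Chan) (n : ℕ) (v : V) (W : Sys V)

variable {V : Type}

/-- Evaluation of closed expressions. -/
def Exp.eval : Exp V → Option V
  | .val v => some v
  | .var _ => none

def Exp.liftD : Exp V → ℕ → Exp V
  | .val v, _ => .val v
  | .var i, k => if i < k then .var i else .var (i + 1)

def Exp.substD : Exp V → ℕ → V → Exp V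
  | .val w, _, _ => .val w
  | .var i, j, v => if i = j then .val v else if j < i then .var (i - 1) else .var i

def BExp.liftD : BExp V → ℕ → BExp V
  | .beq e1 e2, k => .beq (e1.liftD k) (e2.liftD k)
  | .exposed c, _ => .exposed c

def BExp.substD : BExp V → ℕ → V → BExp V
  | .beq e1 e2, j, v => .beq (e1.substD j v) (e2.substD j v)
  | .exposed c, _, _ => .exposed c

/-- Lifting of data variables (≥ k) in a process. -/
def Proc.liftD : Proc V → ℕ → Proc V
  | .broadcast c e P, k => .broadcast c (e.liftD k) (Proc.liftD P k)
  | .rcv c P Q, k => .rcv c (Proc.liftD P (k + 1)) (Proc.liftD Q k)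
  | .sigma P, k => .sigma (Proc.liftD P k)
  | .tau P, k => .tau (Proc.liftD P k)
  | .sum P Q, k => .sum (Proc.liftD P k) (Proc.liftD Q k)
  | .mtch b P Q, k => .mtch (b.liftD k) (Proc.liftD P k) (Proc.liftD Q k)
  | .pvar X, _ => .pvar X
  | .nil, _ => .nil
  | .fix P, k => .fix (Proc.liftD P k)

/-- Substitution of a (closed) value for data variable j in a process. -/
def Proc.substD : Proc V → ℕ → V → Proc V
  | .broadcast c e P, j, v => .broadcast c (e.substD j v) (Proc.substD P j v)
  | .rcv c P Q, j, v => .rcv c (Proc.substD P (j + 1) v) (Proc.substD Q j v)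
  | .sigma P, j, v => .sigma (Proc.substD P j v)
  | .tau P, j, v => .tau (Proc.substD P j v)
  | .sum P Q, j, v => .sum (Proc.substD P j v) (Proc.substD Q j v)
  | .mtch b P Q, j, v => .mtch (b.substD j v) (Proc.substD P j v) (Proc.substD Q j v)
  | .pvar X, _, _ => .pvar X
  | .nil, _, _ => .nil
  | .fix P, j, v => .fix (Proc.substD P j v)

/-- Lifting of process variables (≥ k) in a process. -/
def Proc.liftP : Proc V → ℕ → Proc V
  | .broadcast c e P, k => .broadcast c e (Proc.liftP P k)
  | .rcv c P Q, k => .rcv c (Proc.liftP P k) (Proc.liftP Q k)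
  | .sigma P, k => .sigma (Proc.liftP P k)
  | .tau P, k => .tau (Proc.liftP P k)
  | .sum P Q, k => .sum (Proc.liftP P k) (Proc.liftP Q k)
  | .mtch b P Q, k => .mtch b (Proc.liftP P k) (Proc.liftP Q k)
  | .pvar X, k => if X < k then .pvar X else .pvar (X + 1)
  | .nil, _ => .nil
  | .fix P, k => .fix (Proc.liftP P (k + 1))

/-- Substitution of a process S for process variable j (used for unfolding fix). -/
def Proc.substP : Proc V → ℕ → Proc V → Proc V
  | .broadcast c e P, j, S => .broadcast c e (Proc.substP P j S)
  | .rcv c P Q, j, S => .rcv c (Proc.substP P j (Proc.liftD S 0)) (Proc.substP Q j S)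
  | .sigma P, j, S => .sigma (Proc.substP P j S)
  | .tau P, j, S => .tau (Proc.substP P j S)
  | .sum P Q, j, S => .sum (Proc.substP P j S) (Proc.substP Q j S)
  | .mtch b P Q, j, S => .mtch b (Proc.substP P j S) (Proc.substP Q j S)
  | .pvar X, j, S => if X = j then S else if j < X then .pvar (X - 1) else .pvar X
  | .nil, _, _ => .nil
  | .fix P, j, S => .fix (Proc.substP P (j + 1) (Proc.liftP S 0))

/-- Iterated time-delay prefix σ^n.P -/
def Proc.sigmaIter : ℕ → Proc V → Proc V
  | 0, P => P
  | n + 1, P => .sigma (Proc.sigmaIter n P)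

/-- Does the process contain an unguarded receiver listening on channel c? -/
def Proc.hasRcv : Proc V → Chan → Bool
  | .broadcast _ _ _, _ => false
  | .rcv d _ _, c => d == c
  | .sigma _, _ => false
  | .tau _, _ => false
  | .sum P Q, c => Proc.hasRcv P c || Proc.hasRcv Q c
  | .mtch _ _ _, _ => false
  | .pvar _, _ => false
  | .nil, _ => false
  | .fix P, c => Proc.hasRcv P c

/-- Does the system term contain an unguarded receiver listening on channel c? -/
def Sys.hasRcv : Sys V → Chan → Bool
  | .proc P, c => P.hasRcv c
  | .active _ _, _ => false
  | .par W1 W2, c => Sys.hasRcv W1 c || Sys.hasRcv W2 c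
  | .res d _ _ W, c => if d = c then false else Sys.hasRcv W c

/-- The predicate rcv(Γ ▷ W, c): channel c is idle in Γ and W contains an
unguarded receiver actively awaiting a message on c. -/
def Isrcv (Γ : ChanEnv V) (W : Sys V) (c : Chan) : Prop :=
  (Γ c).1 = 0 ∧ W.hasRcv c = true

/- Closedness of terms: data variables < dk and process variables < pk. -/

def Exp.closedUnder : Exp V → ℕ → Bool
  | .val _, _ => true
  | .var i, dk => decide (i < dk)

def BExp.closedUnder : BExp V → ℕ → Bool
  | .beq e1 e2, dk => e1.closedUnder dk && e2.closedUnder dk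
  | .exposed _, _ => true

def Proc.closedUnder : Proc V → ℕ → ℕ → Bool
  | .broadcast _ e P, dk, pk => e.closedUnder dk && Proc.closedUnder P dk pk
  | .rcv _ P Q, dk, pk => Proc.closedUnder P (dk + 1) pk && Proc.closedUnder Q dk pk
  | .sigma P, dk, pk => Proc.closedUnder P dk pk
  | .tau P, dk, pk => Proc.closedUnder P dk pk
  | .sum P Q, dk, pk => Proc.closedUnder P dk pk && Proc.closedUnder Q dk pk
  | .mtch b P Q, dk, pk => b.closedUnder dk && Proc.closedUnder P dk pk && Proc.closedUnder Q dk pk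
  | .pvar X, _, pk => decide (X < pk)
  | .nil, _, _ => true
  | .fix P, dk, pk => Proc.closedUnder P dk (pk + 1)

def Sys.closedUnder : Sys V → ℕ → ℕ → Bool
  | .proc P, dk, pk => P.closedUnder dk pk
  | .active _ P, dk, pk => P.closedUnder (dk + 1) pk
  | .par W1 W2, dk, pk => Sys.closedUnder W1 dk pk && Sys.closedUnder W2 dk pk
  | .res _ _ _ W, dk, pk => Sys.closedUnder W dk pk

/-- Process variable k does not occur unguarded (i.e. every occurrence of k lies
under a time-consuming construct: broadcast, receiver, σ-prefix or matching). -/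
def Proc.guardedVar : Proc V → ℕ → Bool
  | .broadcast _ _ _, _ => true
  | .rcv _ _ _, _ => true
  | .sigma _, _ => true
  | .tau P, k => Proc.guardedVar P k
  | .sum P Q, k => Proc.guardedVar P k && Proc.guardedVar Q k
  | .mtch _ _ _, _ => true
  | .pvar X, k => X != k
  | .nil, _ => true
  | .fix P, k => Proc.guardedVar P (k + 1)

/-- Every recursion fix X.P in the term has its recursion variable guarded by a
time-consuming construct. -/
def Proc.wfRec : Proc V → Bool
  | .broadcast _ _ P => Proc.wfRec P
  | .rcv _ P Q => Proc.wfRec P && Proc.wfRec Q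
  | .sigma P => Proc.wfRec P
  | .tau P => Proc.wfRec P
  | .sum P Q => Proc.wfRec P && Proc.wfRec Q
  | .mtch _ P Q => Proc.wfRec P && Proc.wfRec Q
  | .pvar _ => true
  | .nil => true
  | .fix P => Proc.wfRec P && Proc.guardedVar P 0

def Sys.wfRec : Sys V → Bool
  | .proc P => P.wfRec
  | .active _ P => P.wfRec
  | .par W1 W2 => Sys.wfRec W1 && Sys.wfRec W2
  | .res _ _ _ W => Sys.wfRec W

/-- A legal system term: closed, and all recursion variables guarded. -/
def Sys.proper (W : Sys V) : Prop :=
  W.closedUnder 0 0 = true ∧ W.wfRec = true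

/- Free channel occurrences. -/

def BExp.usesChan : BExp V → Chan → Bool
  | .beq _ _, _ => false
  | .exposed d, c => d == c

def Proc.freeChan : Proc V → Chan → Bool
  | .broadcast d _ P, c => d == c || Proc.freeChan P c
  | .rcv d P Q, c => d == c || Proc.freeChan P c || Proc.freeChan Q c
  | .sigma P, c => Proc.freeChan P c
  | .tau P, c => Proc.freeChan P c
  | .sum P Q, c => Proc.freeChan P c || Proc.freeChan Q c
  | .mtch b P Q, c => b.usesChan c || Proc.freeChan P c || Proc.freeChan Q c
  | .pvar _, _ => false
  | .nil, _ => false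
  | .fix P, c => Proc.freeChan P c

def Sys.freeChan : Sys V → Chan → Bool
  | .proc P, c => P.freeChan c
  | .active d P, c => d == c || P.freeChan c
  | .par W1 W2, c => Sys.freeChan W1 c || Sys.freeChan W2 c
  | .res d _ _ W, c => if d = c then false else Sys.freeChan W c

/-- Labels of the intensional semantics. -/
inductive Label (V : Type) : Type where
  | out (c : Chan) (v : V)    -- c!v
  | inp (c : Chan) (v : V)    -- c?v
  | tau
  | sigma

def Label.usesChan : Label V → Chan → Prop
  | .out d _, c => d = c
  | .inp d _, c => d = c
  | .tau, _ => False
  | .sigma, _ => False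

/-- Updating a channel environment at channel c upon a broadcast (or input) of
value v: this models collisions. -/
def updBcast (errv : V) (δ : V → ℕ) (Γ : ChanEnv V) (c : Chan) (v : V) : ChanEnv V :=
  fun d => if d = c then
      (if (Γ c).1 = 0 then (δ v, v) else (max (δ v) (Γ c).1, errv))
    else Γ d

/-- The channel-environment update upd_λ(Γ). -/
def updL (errv : V) (δ : V → ℕ) : Label V → ChanEnv V → ChanEnv V
  | .out c v, Γ => updBcast errv δ Γ c v
  | .inp c v, Γ => updBcast errv δ Γ c v
  | .tau, Γ => Γ
  | .sigma, Γ => fun c => ((Γ c).1 - 1, (Γ c).2)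

/-- Γ[c ↦ p] -/
def updEnv (Γ : ChanEnv V) (c : Chan) (p : ℕ × V) : ChanEnv V :=
  fun d => if d = c then p else Γ d

/-- Evaluation of (closed) boolean expressions relative to a channel environment. -/
inductive BEval (Γ : ChanEnv V) : BExp V → Bool → Prop where
  | beqT {e1 e2 : Exp V} {v : V} :
      e1.eval = some v → e2.eval = some v → BEval Γ (.beq e1 e2) true
  | beqF {e1 e2 : Exp V} {v1 v2 : V} :
      e1.eval = some v1 → e2.eval = some v2 → v1 ≠ v2 → BEval Γ (.beq e1 e2) false
  | expT {c : Chan} : 0 < (Γ c).1 → BEval Γ (.exposed c) true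
  | expF {c : Chan} : (Γ c).1 = 0 → BEval Γ (.exposed c) false

/-- The intensional semantics of CCCP: Γ ▷ W --λ--> W'.
Parameters: `errv` is the error value, `δ` gives the transmission time of values. -/
inductive Step (errv : V) (δ : V → ℕ) : ChanEnv V → Sys V → Label V → Sys V → Prop where
  -- (Snd)
  | snd {Γ : ChanEnv V} {c : Chan} {e : Exp V} {v : V} {P : Proc V} :
      e.eval = some v →
      Step errv δ Γ (.proc (.broadcast c e P)) (.out c v) (.proc (Proc.sigmaIter (δ v) P))
  -- (Rcv)
  | rcv {Γ : ChanEnv V} {c : Chan} {P Q : Proc V} {v : V} :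
      (Γ c).1 = 0 →
      Step errv δ Γ (.proc (.rcv c P Q)) (.inp c v) (.active c P)
  -- (RcvIgn)
  | rcvIgn {Γ : ChanEnv V} {W : Sys V} {c : Chan} {v : V} :
      ¬ Isrcv Γ W c →
      Step errv δ Γ W (.inp c v) W
  -- (Sync) and its symmetric counterpart
  | sync {Γ : ChanEnv V} {W1 W2 W1' W2' : Sys V} {c : Chan} {v : V} :
      Step errv δ Γ W1 (.out c v) W1' → Step errv δ Γ W2 (.inp c v) W2' →
      Step errv δ Γ (.par W1 W2) (.out c v) (.par W1' W2')
  | syncR {Γ : ChanEnv V} {W1 W2 W1' W2' : Sys V} {c : Chan} {v : V} :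
      Step errv δ Γ W1 (.inp c v) W1' → Step errv δ Γ W2 (.out c v) W2' →
      Step errv δ Γ (.par W1 W2) (.out c v) (.par W1' W2')
  -- (RcvPar)
  | rcvPar {Γ : ChanEnv V} {W1 W2 W1' W2' : Sys V} {c : Chan} {v : V} :
      Step errv δ Γ W1 (.inp c v) W1' → Step errv δ Γ W2 (.inp c v) W2' →
      Step errv δ Γ (.par W1 W2) (.inp c v) (.par W1' W2')
  -- (TimeNil)
  | timeNil {Γ : ChanEnv V} :
      Step errv δ Γ (.proc .nil) .sigma (.proc .nil)
  -- (Sleep)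
  | sleep {Γ : ChanEnv V} {P : Proc V} :
      Step errv δ Γ (.proc (.sigma P)) .sigma (.proc P)
  -- (ActRcv)
  | actRcv {Γ : ChanEnv V} {c : Chan} {P : Proc V} :
      1 < (Γ c).1 →
      Step errv δ Γ (.active c P) .sigma (.active c P)
  -- (EndRcv)
  | endRcv {Γ : ChanEnv V} {c : Chan} {P : Proc V} {w : V} :
      (Γ c).1 = 1 → (Γ c).2 = w →
      Step errv δ Γ (.active c P) .sigma (.proc (Proc.substD P 0 w))
  -- (Timeout)
  | timeout {Γ : ChanEnv V} {c : Chan} {P Q : Proc V} :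
      (Γ c).1 = 0 →
      Step errv δ Γ (.proc (.rcv c P Q)) .sigma (.proc Q)
  -- (RcvLate)
  | rcvLate {Γ : ChanEnv V} {c : Chan} {P Q : Proc V} :
      0 < (Γ c).1 →
      Step errv δ Γ (.proc (.rcv c P Q)) .tau (.active c (Proc.liftD (Proc.substD P 0 errv) 0))
  -- (Tau)
  | tauStep {Γ : ChanEnv V} {P : Proc V} :
      Step errv δ Γ (.proc (.tau P)) .tau (.proc P)
  -- (Then)
  | thenB {Γ : ChanEnv V} {b : BExp V} {P Q : Proc V} :
      BEval Γ b true →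
      Step errv δ Γ (.proc (.mtch b P Q)) .tau (.proc (.sigma P))
  -- (Else)
  | elseB {Γ : ChanEnv V} {b : BExp V} {P Q : Proc V} :
      BEval Γ b false →
      Step errv δ Γ (.proc (.mtch b P Q)) .tau (.proc (.sigma Q))
  -- (TimePar)
  | timePar {Γ : ChanEnv V} {W1 W2 W1' W2' : Sys V} :
      Step errv δ Γ W1 .sigma W1' → Step errv δ Γ W2 .sigma W2' →
      Step errv δ Γ (.par W1 W2) .sigma (.par W1' W2')
  -- (TauPar) and its symmetric counterpart
  | tauParL {Γ : ChanEnv V} {W1 W2 W1' : Sys V} :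
      Step errv δ Γ W1 .tau W1' →
      Step errv δ Γ (.par W1 W2) .tau (.par W1' W2)
  | tauParR {Γ : ChanEnv V} {W1 W2 W2' : Sys V} :
      Step errv δ Γ W2 .tau W2' →
      Step errv δ Γ (.par W1 W2) .tau (.par W1 W2')
  -- (Rec)
  | recS {Γ : ChanEnv V} {P : Proc V} {lam : Label V} {W : Sys V} :
      Step errv δ Γ (.proc (Proc.substP P 0 (.fix P))) lam W →
      Step errv δ Γ (.proc (.fix P)) lam W
  -- (Sum) and its symmetric counterpart
  | sumL {Γ : ChanEnv V} {P Q : Proc V} {lam : Label V} {W : Sys V} :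
      Step errv δ Γ (.proc P) lam W → (lam = .tau ∨ ∃ c v, lam = .out c v) →
      Step errv δ Γ (.proc (.sum P Q)) lam W
  | sumR {Γ : ChanEnv V} {P Q : Proc V} {lam : Label V} {W : Sys V} :
      Step errv δ Γ (.proc Q) lam W → (lam = .tau ∨ ∃ c v, lam = .out c v) →
      Step errv δ Γ (.proc (.sum P Q)) lam W
  -- (SumTime)
  | sumTime {Γ : ChanEnv V} {P Q P' Q' : Proc V} :
      Step errv δ Γ (.proc P) .sigma (.proc P') → Step errv δ Γ (.proc Q) .sigma (.proc Q') →
      Step errv δ Γ (.proc (.sum P Q)) .sigma (.proc (.sum P' Q'))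
  -- (SumRcv) and its symmetric counterpart
  | sumRcvL {Γ : ChanEnv V} {P Q : Proc V} {c : Chan} {v : V} {W : Sys V} :
      Step errv δ Γ (.proc P) (.inp c v) W → Isrcv Γ (.proc P) c →
      Step errv δ Γ (.proc (.sum P Q)) (.inp c v) W
  | sumRcvR {Γ : ChanEnv V} {P Q : Proc V} {c : Chan} {v : V} {W : Sys V} :
      Step errv δ Γ (.proc Q) (.inp c v) W → Isrcv Γ (.proc Q) c →
      Step errv δ Γ (.proc (.sum P Q)) (.inp c v) W
  -- (ResI)
  | resI {Γ : ChanEnv V} {c : Chan} {n : ℕ} {v w : V} {W W' : Sys V} :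
      Step errv δ (updEnv Γ c (n, v)) W (.out c w) W' →
      Step errv δ Γ (.res c n v W) .tau
        (.res c (updBcast errv δ (updEnv Γ c (n, v)) c w c).1
                (updBcast errv δ (updEnv Γ c (n, v)) c w c).2 W')
  -- (ResV)
  | resV {Γ : ChanEnv V} {c : Chan} {n : ℕ} {v : V} {W W' : Sys V} {lam : Label V} :
      Step errv δ (updEnv Γ c (n, v)) W lam W' →
      ¬ lam.usesChan c → lam ≠ .sigma →
      Step errv δ Γ (.res c n v W) lam (.res c n v W')
  -- time passage under restriction
  | resT {Γ : ChanEnv V} {c : Chan} {n : ℕ} {v : V} {W W' : Sys V} :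
      Step errv δ (updEnv Γ c (n, v)) W .sigma W' →
      Step errv δ Γ (.res c n v W) .sigma (.res c (n - 1) v W')

/-- Configurations. -/
abbrev Config (V : Type) : Type := ChanEnv V × Sys V

/-- Instantaneous reductions (broadcast or internal step). -/
def RedI (errv : V) (δ : V → ℕ) (C C' : Config V) : Prop :=
  (Step errv δ C.1 C.2 .tau C'.2 ∧ C'.1 = C.1) ∨
  (∃ c v, Step errv δ C.1 C.2 (.out c v) C'.2 ∧ C'.1 = updBcast errv δ C.1 c v)

/-- Timed reductions. -/
def RedT (errv : V) (δ : V → ℕ) (C C' : Config V) : Prop :=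
  Step errv δ C.1 C.2 .sigma C'.2 ∧ C'.1 = updL errv δ .sigma C.1

/-- Reductions of configurations. -/
def Red (errv : V) (δ : V → ℕ) (C C' : Config V) : Prop :=
  RedI errv δ C C' ∨ RedT errv δ C C'

def RedStar (errv : V) (δ : V → ℕ) : Config V → Config V → Prop :=
  Relation.ReflTransGen (Red errv δ)

def RedIStar (errv : V) (δ : V → ℕ) : Config V → Config V → Prop :=
  Relation.ReflTransGen (RedI errv δ)

/-- Iteration of a relation a fixed number of times. -/
def relPow {α : Type _} (r : α → α → Prop) : ℕ → α → α → Prop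
  | 0 => Eq
  | n + 1 => fun a c => ∃ b, r a b ∧ relPow r n b c

/-- Strong barb: channel c is exposed. -/
def Barb (C : Config V) (c : Chan) : Prop := 0 < (C.1 c).1

/-- Weak barb. -/
def WBarb (errv : V) (δ : V → ℕ) (C : Config V) (c : Chan) : Prop :=
  ∃ C', RedStar errv δ C C' ∧ Barb C' c

/-- Extensional actions. -/
inductive Act (V : Type) : Type where
  | inp (c : Chan) (v : V)     -- c?v
  | time                       -- σ
  | tauA                       -- τ
  | deliver (c : Chan) (v : V) -- γ(c,v)
  | idle (c : Chan)            -- ι(c)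

/-- The extensional LTS over configurations. -/
inductive EStep (errv : V) (δ : V → ℕ) : Config V → Act V → Config V → Prop where
  | einp {Γ : ChanEnv V} {W W' : Sys V} {c : Chan} {v : V} :
      Step errv δ Γ W (.inp c v) W' →
      EStep errv δ (Γ, W) (.inp c v) (updBcast errv δ Γ c v, W')
  | etime {Γ : ChanEnv V} {W W' : Sys V} :
      Step errv δ Γ W .sigma W' →
      EStep errv δ (Γ, W) .time (updL errv δ .sigma Γ, W')
  | eshh {Γ : ChanEnv V} {W W' : Sys V} {c : Chan} {v : V} :
      Step errv δ Γ W (.out c v) W' →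
      EStep errv δ (Γ, W) .tauA (updBcast errv δ Γ c v, W')
  | etau {Γ : ChanEnv V} {W W' : Sys V} :
      Step errv δ Γ W .tau W' →
      EStep errv δ (Γ, W) .tauA (Γ, W')
  | edeliver {Γ : ChanEnv V} {W W' : Sys V} {c : Chan} {v : V} :
      Γ c = (1, v) → Step errv δ Γ W .sigma W' →
      EStep errv δ (Γ, W) (.deliver c v) (updL errv δ .sigma Γ, W')
  | eidle {Γ : ChanEnv V} {W : Sys V} {c : Chan} :
      (Γ c).1 = 0 →
      EStep errv δ (Γ, W) (.idle c) (Γ, W)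

/-- Weak internal moves ⟹. -/
def TauStar (errv : V) (δ : V → ℕ) : Config V → Config V → Prop :=
  Relation.ReflTransGen (fun C C' => EStep errv δ C .tauA C')

/-- Weak extensional action C ⟹α⟹ C'. -/
def WStep (errv : V) (δ : V → ℕ) (C : Config V) (α : Act V) (C' : Config V) : Prop :=
  ∃ C1 C2, TauStar errv δ C C1 ∧ EStep errv δ C1 α C2 ∧ TauStar errv δ C2 C'

/-- C ⟹α̂⟹ C'. -/
def WHat (errv : V) (δ : V → ℕ) (C : Config V) (α : Act V) (C' : Config V) : Prop :=
  match α with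
  | .tauA => TauStar errv δ C C'
  | _ => WStep errv δ C α C'

/-- (Weak) bisimulations on the extensional LTS. -/
def IsBisim (errv : V) (δ : V → ℕ) (R : Config V → Config V → Prop) : Prop :=
  Symmetric R ∧
  ∀ C1 C2, R C1 C2 → ∀ (α : Act V) C1', EStep errv δ C1 α C1' →
    ∃ C2', WHat errv δ C2 α C2' ∧ R C1' C2'

/-- Weak bisimilarity ≈. -/
def Bisim (errv : V) (δ : V → ℕ) (C1 C2 : Config V) : Prop :=
  ∃ R, IsBisim errv δ R ∧ R C1 C2

/-- Barb-preserving relations. -/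
def BarbPreserving (errv : V) (δ : V → ℕ) (R : Config V → Config V → Prop) : Prop :=
  ∀ C1 C2, R C1 C2 → ∀ c, WBarb errv δ C1 c → WBarb errv δ C2 c

/-- Reduction-closed relations. -/
def ReductionClosed (errv : V) (δ : V → ℕ) (R : Config V → Config V → Prop) : Prop :=
  ∀ C1 C2, R C1 C2 → ∀ C1', Red errv δ C1 C1' →
    ∃ C2', RedStar errv δ C2 C2' ∧ R C1' C2'

/-- Contextual relations. -/
def Contextual (R : Config V → Config V → Prop) : Prop :=
  ∀ Γ1 W1 Γ2 W2, R (Γ1, W1) (Γ2, W2) →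
    ∀ W : Sys V, W.proper → R (Γ1, .par W1 W) (Γ2, .par W2 W)

/-- Reduction barbed congruence ≃: the largest symmetric, barb-preserving,
reduction-closed and contextual relation. -/
def RBC (errv : V) (δ : V → ℕ) (C1 C2 : Config V) : Prop :=
  ∃ R, Symmetric R ∧ BarbPreserving errv δ R ∧ ReductionClosed errv δ R ∧
    Contextual R ∧ R C1 C2

/-- Well-formed configurations. -/
inductive WF : ChanEnv V → Sys V → Prop where
  | wfProc {Γ : ChanEnv V} (P : Proc V) : WF Γ (.proc P)
  | wfActive {Γ : ChanEnv V} {c : Chan} (P : Proc V) : 0 < (Γ c).1 → WF Γ (.active c P)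
  | wfPar {Γ : ChanEnv V} {W1 W2 : Sys V} : WF Γ W1 → WF Γ W2 → WF Γ (.par W1 W2)
  | wfRes {Γ : ChanEnv V} {c : Chan} {n : ℕ} {v : V} {W : Sys V} :
      WF (updEnv Γ c (n, v)) W → WF Γ (.res c n v W)

/-- Comparison of channel environments: Γ ≤ Γ'. -/
def EnvLE (Γ Γ' : ChanEnv V) : Prop := ∀ c : Chan, (Γ c).1 ≤ (Γ' c).1

/-- The test detecting the delivery action γ(c,v):
T_{γ(c,v)} = νd:(0,dv).( c(x).(([x=v] d!⟨ok⟩, nil) + fail!⟨no⟩)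
                        | σ².([exp(d)] eureka!⟨ok⟩, nil) ). -/
def Tdel {V : Type} (c : Chan) (v : V) (d eureka fail : Chan) (ok no dv : V) : Sys V :=
  .res d 0 dv (.par
    (.active c (.sum
       (.mtch (.beq (.var 0) (.val v)) (.broadcast d (.val ok) .nil) .nil)
       (.broadcast fail (.val no) .nil)))
    (.proc (.sigma (.sigma (.mtch (.exposed d) (.broadcast eureka (.val ok) .nil) .nil)))))

/-- The successful state of the test for γ(c,v):
T✓_{γ(c,v)} = νd:(0,dv).( σ.d!⟨ok⟩ | σ.([exp(d)] eureka!⟨ok⟩, nil) ). -/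
def TdelOK {V : Type} (d eureka : Chan) (ok dv : V) : Sys V :=
  .res d 0 dv (.par
    (.proc (.sigma (.broadcast d (.val ok) .nil)))
    (.proc (.sigma (.mtch (.exposed d) (.broadcast eureka (.val ok) .nil) .nil))))

/- ======================= Auxiliary material ======================= -/

section DetectAux

variable {V : Type} {errv : V} {δ : V → ℕ}

/-- The intermediate state of the test after the timed step resolved via EndRcv. -/
def TSst {V : Type} (w v : V) (d eureka fail : Chan) (ok no dv : V) : Sys V :=
  .res d 0 dv (.par
    (.proc (.sum
       (.mtch (.beq (.val w) (.val v)) (.broadcast d (.val ok) .nil) .nil)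
       (.broadcast fail (.val no) .nil)))
    (.proc (.sigma (.mtch (.exposed d) (.broadcast eureka (.val ok) .nil) .nil))))

/-- The state of the test after the timed step resolved via ActRcv. -/
def TAst {V : Type} (c : Chan) (v : V) (d eureka fail : Chan) (ok no dv : V) : Sys V :=
  .res d 0 dv (.par
    (.active c (.sum
       (.mtch (.beq (.var 0) (.val v)) (.broadcast d (.val ok) .nil) .nil)
       (.broadcast fail (.val no) .nil)))
    (.proc (.sigma (.mtch (.exposed d) (.broadcast eureka (.val ok) .nil) .nil))))

/-- The failed state of the test. -/
def TBst {V : Type} (d eureka : Chan) (ok dv : V) : Sys V :=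
  .res d 0 dv (.par
    (.proc (.sigma .nil))
    (.proc (.sigma (.mtch (.exposed d) (.broadcast eureka (.val ok) .nil) .nil))))

/-- A "stable" system term: all its intensional moves are input self-loops or σ-moves. -/
def Stable (errv : V) (δ : V → ℕ) (T : Sys V) : Prop :=
  ∀ (Γ : ChanEnv V) (lam : Label V) (Y : Sys V), Step errv δ Γ T lam Y →
    (∃ c' v', lam = Label.inp c' v' ∧ Y = T) ∨ lam = Label.sigma

lemma stable_active {c : Chan} {P : Proc V} : Stable errv δ (.active c P) := by
  intro Γ lam Y h
  cases h with
  | rcvIgn _ => exact .inl ⟨_, _, rfl, rfl⟩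
  | actRcv _ => exact .inr rfl
  | endRcv _ _ => exact .inr rfl

lemma step_sigmaP {Γ : ChanEnv V} {P : Proc V} {lam : Label V} {Y : Sys V}
    (h : Step errv δ Γ (.proc (.sigma P)) lam Y) :
    (∃ c' v', lam = Label.inp c' v' ∧ Y = .proc (.sigma P)) ∨
    (lam = Label.sigma ∧ Y = .proc P) := by
  cases h with
  | rcvIgn _ => exact .inl ⟨_, _, rfl, rfl⟩
  | sleep => exact .inr ⟨rfl, rfl⟩

lemma stable_sigmaP {P : Proc V} : Stable errv δ (.proc (.sigma P)) := by
  intro Γ lam Y h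
  rcases step_sigmaP h with h | ⟨h, _⟩
  · exact .inl h
  · exact .inr h

lemma stable_res_par {d : Chan} {n : ℕ} {dv : V} {A B : Sys V}
    (hA : Stable errv δ A) (hB : Stable errv δ B) :
    Stable errv δ (.res d n dv (.par A B)) := by
  intro Γ lam Y h
  cases h with
  | rcvIgn _ => exact .inl ⟨_, _, rfl, rfl⟩
  | resI h0 =>
    cases h0 with
    | sync h1 h2 => rcases hA _ _ _ h1 with ⟨_, _, h, _⟩ | h <;> cases h
    | syncR h1 h2 => rcases hB _ _ _ h2 with ⟨_, _, h, _⟩ | h <;> cases h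
  | resV h0 hu hs =>
    cases h0 with
    | rcvIgn _ => exact .inl ⟨_, _, rfl, rfl⟩
    | rcvPar h1 h2 =>
      rcases hA _ _ _ h1 with ⟨_, _, _, rfl⟩ | h
      · rcases hB _ _ _ h2 with ⟨_, _, _, rfl⟩ | h
        · exact .inl ⟨_, _, rfl, rfl⟩
        · cases h
      · cases h
    | sync h1 h2 => rcases hA _ _ _ h1 with ⟨_, _, h, _⟩ | h <;> cases h
    | syncR h1 h2 => rcases hB _ _ _ h2 with ⟨_, _, h, _⟩ | h <;> cases h
    | timePar h1 h2 => exact absurd rfl hs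
    | tauParL h1 => rcases hA _ _ _ h1 with ⟨_, _, h, _⟩ | h <;> cases h
    | tauParR h2 => rcases hB _ _ _ h2 with ⟨_, _, h, _⟩ | h <;> cases h
  | resT h0 => exact .inr rfl

lemma step_Sw {Γ : ChanEnv V} {w v : V} {d fail : Chan} {ok no : V} {lam : Label V} {Y : Sys V}
    (h : Step errv δ Γ (.proc (.sum
        (.mtch (.beq (.val w) (.val v)) (.broadcast d (.val ok) .nil) .nil)
        (.broadcast fail (.val no) .nil))) lam Y) :
    (∃ c' v', lam = Label.inp c' v' ∧ Y = .proc (.sum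
        (.mtch (.beq (.val w) (.val v)) (.broadcast d (.val ok) .nil) .nil)
        (.broadcast fail (.val no) .nil))) ∨
    (lam = Label.tau ∧ w = v ∧ Y = .proc (.sigma (.broadcast d (.val ok) .nil))) ∨
    (lam = Label.tau ∧ Y = .proc (.sigma .nil)) ∨
    (lam = Label.out fail no ∧ Y = .proc (Proc.sigmaIter (δ no) .nil)) := by
  cases h with
  | rcvIgn _ => exact .inl ⟨_, _, rfl, rfl⟩
  | sumL h0 hl =>
    cases h0 with
    | rcvIgn _ => rcases hl with h | ⟨_, _, h⟩ <;> cases h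
    | thenB hb =>
      cases hb with
      | beqT h1 h2 =>
        have h1' : some w = _ := h1
        have h2' : some v = _ := h2
        injection h1' with h1'; injection h2' with h2'
        exact .inr (.inl ⟨rfl, by rw [h1', h2'], rfl⟩)
    | elseB _ => exact .inr (.inr (.inl ⟨rfl, rfl⟩))
  | sumR h0 hl =>
    cases h0 with
    | rcvIgn _ => rcases hl with h | ⟨_, _, h⟩ <;> cases h
    | snd he =>
      have he' : some no = _ := he
      injection he' with he'
      subst he'
      exact .inr (.inr (.inr ⟨rfl, rfl⟩))
  | sumTime h1 h2 => cases h1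
  | sumRcvL h0 hr => exact absurd hr.2 (by simp [Sys.hasRcv, Proc.hasRcv])
  | sumRcvR h0 hr => exact absurd hr.2 (by simp [Sys.hasRcv, Proc.hasRcv])

lemma step_TS {Γ : ChanEnv V} {w v : V} {d eureka fail : Chan} {ok no dv : V}
    {lam : Label V} {Y : Sys V}
    (hdf : d ≠ fail) (hno : δ no = 1)
    (h : Step errv δ Γ (TSst w v d eureka fail ok no dv) lam Y) :
    (∃ c' v', lam = Label.inp c' v' ∧ Y = TSst w v d eureka fail ok no dv) ∨
    lam = Label.sigma ∨
    (lam = Label.tau ∧ w = v ∧ Y = TdelOK d eureka ok dv) ∨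
    (lam = Label.tau ∧ Y = TBst d eureka ok dv) ∨
    (lam = Label.out fail no ∧ Y = TBst d eureka ok dv) := by
  simp only [TSst] at h
  cases h with
  | rcvIgn _ => exact .inl ⟨_, _, rfl, rfl⟩
  | resI h0 =>
    cases h0 with
    | sync h1 h2 =>
      rcases step_Sw h1 with ⟨_, _, h, _⟩ | ⟨h, _⟩ | ⟨h, _⟩ | ⟨h, _⟩
      · cases h
      · cases h
      · cases h
      · injection h with hd _; exact absurd hd hdf
    | syncR h1 h2 => rcases step_sigmaP h2 with ⟨_, _, h, _⟩ | ⟨h, _⟩ <;> cases h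
  | resV h0 hu hs =>
    cases h0 with
    | rcvIgn _ => exact .inl ⟨_, _, rfl, rfl⟩
    | rcvPar h1 h2 =>
      rcases step_Sw h1 with ⟨_, _, _, rfl⟩ | ⟨h, _⟩ | ⟨h, _⟩ | ⟨h, _⟩
      · rcases step_sigmaP h2 with ⟨_, _, _, rfl⟩ | ⟨h, _⟩
        · exact .inl ⟨_, _, rfl, rfl⟩
        · cases h
      · cases h
      · cases h
      · cases h
    | sync h1 h2 =>
      rcases step_Sw h1 with ⟨_, _, h, _⟩ | ⟨h, _⟩ | ⟨h, _⟩ | ⟨heq, rfl⟩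
      · cases h
      · cases h
      · cases h
      · rcases step_sigmaP h2 with ⟨_, _, _, rfl⟩ | ⟨h, _⟩
        · refine .inr (.inr (.inr (.inr ⟨heq, ?_⟩)))
          simp [TBst, hno, Proc.sigmaIter]
        · cases h
    | syncR h1 h2 => rcases step_sigmaP h2 with ⟨_, _, h, _⟩ | ⟨h, _⟩ <;> cases h
    | timePar h1 h2 => exact absurd rfl hs
    | tauParL h1 =>
      rcases step_Sw h1 with ⟨_, _, h, _⟩ | ⟨_, hwv, rfl⟩ | ⟨_, rfl⟩ | ⟨h, _⟩
      · cases h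
      · exact .inr (.inr (.inl ⟨rfl, hwv, rfl⟩))
      · exact .inr (.inr (.inr (.inl ⟨rfl, rfl⟩)))
      · cases h
    | tauParR h2 => rcases step_sigmaP h2 with ⟨_, _, h, _⟩ | ⟨h, _⟩ <;> cases h
  | resT _ => exact .inr (.inl rfl)

lemma substD_S0 {v x : V} {d fail : Chan} {ok no : V} :
    Proc.substD (.sum
        (.mtch (.beq (.var 0) (.val v)) (.broadcast d (.val ok) .nil) .nil)
        (.broadcast fail (.val no) .nil)) 0 x =
    (.sum (.mtch (.beq (.val x) (.val v)) (.broadcast d (.val ok) .nil) .nil)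
        (.broadcast fail (.val no) .nil)) := by
  simp [Proc.substD, Exp.substD, BExp.substD]

lemma step_TD_sigma {Γ : ChanEnv V} {c : Chan} {v : V} {d eureka fail : Chan}
    {ok no dv : V} {Y : Sys V} (hdc : d ≠ c)
    (h : Step errv δ Γ (Tdel c v d eureka fail ok no dv) Label.sigma Y) :
    (1 < (Γ c).1 ∧ Y = TAst c v d eureka fail ok no dv) ∨
    ((Γ c).1 = 1 ∧ Y = TSst (Γ c).2 v d eureka fail ok no dv) := by
  have hcd : ¬ (c = d) := fun h => hdc h.symm
  simp only [Tdel] at h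
  cases h with
  | resV h0 hu hs => exact absurd rfl hs
  | resT h0 =>
    cases h0 with
    | timePar h1 h2 =>
      rcases step_sigmaP h2 with ⟨_, _, h, _⟩ | ⟨_, rfl⟩
      · cases h
      cases h1 with
      | actRcv hgt =>
        refine .inl ⟨?_, rfl⟩
        simpa [updEnv, hcd] using hgt
      | endRcv h1' h2' =>
        rw [updEnv] at h1' h2'
        simp only [if_neg hcd] at h1' h2'
        refine .inr ⟨h1', ?_⟩
        rw [h2']
        simp [TSst, substD_S0]

lemma step_par_sigma {Γ : ChanEnv V} {A B Y : Sys V}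
    (h : Step errv δ Γ (.par A B) Label.sigma Y) :
    ∃ A' B', Y = .par A' B' ∧ Step errv δ Γ A Label.sigma A' ∧
      Step errv δ Γ B Label.sigma B' := by
  cases h with
  | timePar h1 h2 => exact ⟨_, _, rfl, h1, h2⟩

lemma step_par_stable {Γ : ChanEnv V} {T X : Sys V} {lam : Label V} {Y : Sys V}
    (hT : Stable errv δ T) (h : Step errv δ Γ (.par X T) lam Y)
    (hl : lam = Label.tau ∨ ∃ c' v', lam = Label.out c' v') :
    ∃ X', Y = .par X' T ∧ Step errv δ Γ X lam X' := by
  cases h with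
  | rcvIgn _ => rcases hl with h | ⟨_, _, h⟩ <;> cases h
  | rcvPar _ _ => rcases hl with h | ⟨_, _, h⟩ <;> cases h
  | timePar _ _ => rcases hl with h | ⟨_, _, h⟩ <;> cases h
  | sync h1 h2 =>
    rcases hT _ _ _ h2 with ⟨_, _, _, rfl⟩ | h
    · exact ⟨_, rfl, h1⟩
    · cases h
  | syncR h1 h2 => rcases hT _ _ _ h2 with ⟨_, _, h, _⟩ | h <;> cases h
  | tauParL h1 => exact ⟨_, rfl, h1⟩
  | tauParR h2 => rcases hT _ _ _ h2 with ⟨_, _, h, _⟩ | h <;> cases h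

lemma step_par_TS {Γ : ChanEnv V} {X : Sys V} {w v : V} {d eureka fail : Chan}
    {ok no dv : V} {lam : Label V} {Y : Sys V}
    (hdf : d ≠ fail) (hno : δ no = 1)
    (h : Step errv δ Γ (.par X (TSst w v d eureka fail ok no dv)) lam Y)
    (hl : lam = Label.tau ∨ ∃ c' v', lam = Label.out c' v') :
    (∃ X', Y = .par X' (TSst w v d eureka fail ok no dv) ∧ Step errv δ Γ X lam X') ∨
    (lam = Label.tau ∧ w = v ∧ Y = .par X (TdelOK d eureka ok dv)) ∨
    (∃ X', Y = .par X' (TBst d eureka ok dv)) := by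
  cases h with
  | rcvIgn _ => rcases hl with h | ⟨_, _, h⟩ <;> cases h
  | rcvPar _ _ => rcases hl with h | ⟨_, _, h⟩ <;> cases h
  | timePar _ _ => rcases hl with h | ⟨_, _, h⟩ <;> cases h
  | tauParL h1 => exact .inl ⟨_, rfl, h1⟩
  | tauParR h2 =>
    rcases step_TS hdf hno h2 with ⟨_, _, h, _⟩ | h | ⟨_, hwv, rfl⟩ | ⟨_, rfl⟩ | ⟨h, _⟩
    · cases h
    · cases h
    · exact .inr (.inl ⟨rfl, hwv, rfl⟩)
    · exact .inr (.inr ⟨_, rfl⟩)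
    · cases h
  | sync h1 h2 =>
    rcases step_TS hdf hno h2 with ⟨_, _, _, rfl⟩ | h | ⟨h, _⟩ | ⟨h, _⟩ | ⟨h, _⟩
    · exact .inl ⟨_, rfl, h1⟩
    · cases h
    · cases h
    · cases h
    · cases h
  | syncR h1 h2 =>
    rcases step_TS hdf hno h2 with ⟨_, _, h, _⟩ | h | ⟨h, _⟩ | ⟨h, _⟩ | ⟨_, rfl⟩
    · cases h
    · cases h
    · cases h
    · cases h
    · exact .inr (.inr ⟨_, rfl⟩)

lemma redIStar_stable_inv {T : Sys V} (hT : Stable errv δ T) :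
    ∀ {C D : Config V}, RedIStar errv δ C D → ∀ {Γ : ChanEnv V} {X : Sys V},
      C = (Γ, .par X T) →
      ∃ Δ Z, D = (Δ, .par Z T) ∧ TauStar errv δ (Γ, X) (Δ, Z) := by
  intro C D h
  induction h with
  | refl => intro Γ X hC; exact ⟨Γ, X, hC, .refl⟩
  | tail hab hbc ih =>
    intro Γ X hC
    obtain ⟨Δ, Z, rfl, hts⟩ := ih hC
    rcases hbc with ⟨hstep, henv⟩ | ⟨c0, v0, hstep, henv⟩
    · obtain ⟨Z', hY, hZ⟩ := step_par_stable hT hstep (.inl rfl)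
      exact ⟨Δ, Z', Prod.ext henv hY, hts.tail (EStep.etau hZ)⟩
    · obtain ⟨Z', hY, hZ⟩ := step_par_stable hT hstep (.inr ⟨_, _, rfl⟩)
      exact ⟨updBcast errv δ Δ c0 v0, Z', Prod.ext henv hY, hts.tail (EStep.eshh hZ)⟩

lemma redIStar_TS_inv {w v : V} {d eureka fail : Chan} {ok no dv : V}
    (hdf : d ≠ fail) (hno : δ no = 1) :
    ∀ {C D : Config V}, RedIStar errv δ C D → ∀ {Γ : ChanEnv V} {X : Sys V},
      C = (Γ, .par X (TSst w v d eureka fail ok no dv)) →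
      (∃ Δ Z, D = (Δ, .par Z (TSst w v d eureka fail ok no dv)) ∧
          TauStar errv δ (Γ, X) (Δ, Z)) ∨
      (w = v ∧ ∃ Δ Z, D = (Δ, .par Z (TdelOK d eureka ok dv)) ∧
          TauStar errv δ (Γ, X) (Δ, Z)) ∨
      (∃ Δ Z, D = (Δ, .par Z (TBst d eureka ok dv))) := by
  intro C D h
  induction h with
  | refl => intro Γ X hC; exact .inl ⟨Γ, X, hC, .refl⟩
  | tail hab hbc ih =>
    intro Γ X hC
    rcases ih hC with ⟨Δ, Z, rfl, hts⟩ | ⟨hwv, Δ, Z, rfl, hts⟩ | ⟨Δ, Z, rfl⟩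
    · rcases hbc with ⟨hstep, henv⟩ | ⟨c0, v0, hstep, henv⟩
      · rcases step_par_TS hdf hno hstep (.inl rfl) with
          ⟨Z', hY, hZ⟩ | ⟨_, hwv, hY⟩ | ⟨Z', hY⟩
        · exact .inl ⟨Δ, Z', Prod.ext henv hY, hts.tail (EStep.etau hZ)⟩
        · exact .inr (.inl ⟨hwv, Δ, Z, Prod.ext henv hY, hts⟩)
        · exact .inr (.inr ⟨_, Z', Prod.ext rfl hY⟩)
      · rcases step_par_TS hdf hno hstep (.inr ⟨_, _, rfl⟩) with
          ⟨Z', hY, hZ⟩ | ⟨h, _, _⟩ | ⟨Z', hY⟩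
        · exact .inl ⟨_, Z', Prod.ext henv hY, hts.tail (EStep.eshh hZ)⟩
        · cases h
        · exact .inr (.inr ⟨_, Z', Prod.ext rfl hY⟩)
    · rcases hbc with ⟨hstep, henv⟩ | ⟨c0, v0, hstep, henv⟩
      · obtain ⟨Z', hY, hZ⟩ := step_par_stable
          (stable_res_par stable_sigmaP stable_sigmaP) hstep (.inl rfl)
        exact .inr (.inl ⟨hwv, Δ, Z', Prod.ext henv hY, hts.tail (EStep.etau hZ)⟩)
      · obtain ⟨Z', hY, hZ⟩ := step_par_stable
          (stable_res_par stable_sigmaP stable_sigmaP) hstep (.inr ⟨_, _, rfl⟩)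
        exact .inr (.inl ⟨hwv, _, Z', Prod.ext henv hY, hts.tail (EStep.eshh hZ)⟩)
    · rcases hbc with ⟨hstep, henv⟩ | ⟨c0, v0, hstep, henv⟩
      · obtain ⟨Z', hY, hZ⟩ := step_par_stable
          (stable_res_par stable_sigmaP stable_sigmaP) hstep (.inl rfl)
        exact .inr (.inr ⟨_, Z', Prod.ext henv hY⟩)
      · obtain ⟨Z', hY, hZ⟩ := step_par_stable
          (stable_res_par stable_sigmaP stable_sigmaP) hstep (.inr ⟨_, _, rfl⟩)
        exact .inr (.inr ⟨_, Z', Prod.ext henv hY⟩)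

lemma tauStar_lift {T : Sys V} (hR : ∀ c', Sys.hasRcv T c' = false) :
    ∀ {C D : Config V}, TauStar errv δ C D →
      RedIStar errv δ (C.1, .par C.2 T) (D.1, .par D.2 T) := by
  intro C D h
  induction h with
  | refl => exact .refl
  | tail hab hbc ih =>
    refine ih.tail ?_
    cases hbc with
    | etau h => exact .inl ⟨Step.tauParL h, rfl⟩
    | eshh h =>
      refine .inr ⟨_, _, Step.sync h (Step.rcvIgn ?_), rfl⟩
      intro hr
      have := hr.2
      rw [hR] at this
      exact Bool.false_ne_true this

end DetectAux

/-- Detecting delivery of values (Proposition 4.20 of the paper). -/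
theorem detecting_delivery {V : Type} (errv : V) (δ : V → ℕ) (hδ : ∀ v : V, 1 ≤ δ v)
    (Γ : ChanEnv V) (W : Sys V) (hp : W.proper) (hwf : WF Γ W)
    (c : Chan) (v : V) (d eureka fail : Chan) (ok no dv : V)
    (hok : δ ok = 1) (hno : δ no = 1)
    (hef : eureka ≠ fail) (hec : eureka ≠ c) (hfc : fail ≠ c)
    (hdc : d ≠ c) (hde : d ≠ eureka) (hdf : d ≠ fail)
    (hWe : W.freeChan eureka = false) (hWf : W.freeChan fail = false)
    (hWd : W.freeChan d = false)
    (hGe : (Γ eureka).1 = 0) (hGf : (Γ fail).1 = 0) :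
    ∀ (Γ' : ChanEnv V) (W' : Sys V),
      WStep errv δ (Γ, W) (.deliver c v) (Γ', W') ↔
      (∃ D1 D2 : Config V,
        RedIStar errv δ (Γ, .par W (Tdel c v d eureka fail ok no dv)) D1 ∧
        RedT errv δ D1 D2 ∧
        RedIStar errv δ D2 (Γ', .par W' (TdelOK d eureka ok dv))) := by
  intro Γ' W'
  have hcd : ¬ (c = d) := fun h => hdc h.symm
  have hRTD : ∀ c', Sys.hasRcv (Tdel c v d eureka fail ok no dv) c' = false := by
    intro c'; simp [Tdel, Sys.hasRcv, Proc.hasRcv]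
  have hRTOK : ∀ c', Sys.hasRcv (TdelOK d eureka ok dv) c' = false := by
    intro c'; simp [TdelOK, Sys.hasRcv, Proc.hasRcv]
  have hTDstable : Stable errv δ (Tdel c v d eureka fail ok no dv) :=
    stable_res_par stable_active stable_sigmaP
  constructor
  · rintro ⟨C1, C2, h1, hE, h2⟩
    cases hE with
    | edeliver hΓc hσ =>
      rename_i Γ1 W1 W1'
      refine ⟨(Γ1, .par W1 (Tdel c v d eureka fail ok no dv)),
              (updL errv δ .sigma Γ1, .par W1' (TSst v v d eureka fail ok no dv)),
              tauStar_lift hRTD h1, ⟨?_, rfl⟩, ?_⟩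
      · show Step errv δ Γ1 (.par W1 (Tdel c v d eureka fail ok no dv)) .sigma
          (.par W1' (TSst v v d eureka fail ok no dv))
        refine Step.timePar hσ ?_
        have hσT : Step errv δ Γ1 (Tdel c v d eureka fail ok no dv) .sigma
            (.res d (0 - 1) dv (.par
              (.proc (Proc.substD (.sum
                 (.mtch (.beq (.var 0) (.val v)) (.broadcast d (.val ok) .nil) .nil)
                 (.broadcast fail (.val no) .nil)) 0 v))
              (.proc (.sigma (.mtch (.exposed d) (.broadcast eureka (.val ok) .nil) .nil))))) := by
          refine Step.resT (Step.timePar (Step.endRcv (w := v) ?_ ?_) Step.sleep)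
          · simp [updEnv, hcd, hΓc]
          · simp [updEnv, hcd, hΓc]
        have heq : (.res d (0 - 1) dv (.par
              (.proc (Proc.substD (.sum
                 (.mtch (.beq (.var 0) (.val v)) (.broadcast d (.val ok) .nil) .nil)
                 (.broadcast fail (.val no) .nil)) 0 v))
              (.proc (.sigma (.mtch (.exposed d) (.broadcast eureka (.val ok) .nil) .nil)))) : Sys V)
            = TSst v v d eureka fail ok no dv := by
          simp [TSst, substD_S0]
        rw [heq] at hσT
        exact hσT
      · refine Relation.ReflTransGen.head ?_ (tauStar_lift hRTOK h2)
        refine Or.inl ⟨Step.tauParR (Step.resV (Step.tauParL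
          (Step.sumL (Step.thenB (BEval.beqT rfl rfl)) (Or.inl rfl))) ?_ ?_), rfl⟩
        · exact not_false
        · intro h; cases h
  · rintro ⟨D1, D2, hs1, hσT, hs2⟩
    obtain ⟨Δ, Z, rfl, hts1⟩ := redIStar_stable_inv hTDstable hs1 rfl
    obtain ⟨hst, henv⟩ := hσT
    obtain ⟨D21, D22⟩ := D2
    obtain ⟨Z1, T1, hD22, hZσ, hTσ⟩ := step_par_sigma hst
    simp only at hD22 henv hs2
    subst hD22
    subst henv
    rcases step_TD_sigma hdc hTσ with ⟨hgt, rfl⟩ | ⟨h1, rfl⟩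
    · obtain ⟨Δf, Zf, hfin, _⟩ := redIStar_stable_inv
        (stable_res_par stable_active stable_sigmaP :
          Stable errv δ (TAst c v d eureka fail ok no dv)) hs2 rfl
      exact absurd hfin (by simp [TAst, TdelOK])
    · rcases redIStar_TS_inv hdf hno hs2 rfl with
        ⟨Δf, Zf, hfin, _⟩ | ⟨hwv, Δf, Zf, hfin, hts2⟩ | ⟨Δf, Zf, hfin⟩
      · exact absurd hfin (by simp [TSst, TdelOK])
      · injection hfin with hA hB
        injection hB with hB _
        subst hA; subst hB
        refine ⟨(Δ, Z), (updL errv δ .sigma Δ, Z1), hts1,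
          EStep.edeliver ?_ hZσ, hts2⟩
        have : Δ c = ((Δ c).1, (Δ c).2) := rfl
        rw [this, h1, hwv]
      · exact absurd hfin (by simp [TBst, TdelOK])


end CCCP
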